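/- Let n be a positive integer, let X and Y be real symmetric n×n matrices with Y positive definite, let K = Y^{-1/2} [−(X+iY), Iₙ], and let V_p = (1/2)[[Y⁻¹, Y⁻¹X],[XY⁻¹, XY⁻¹X + Y]] be the 2n×2n real block matrix. Then Σ · Re(K†K) · Σᵀ = 2 V_p, where Σ = [[0, Iₙ],[−Iₙ, 0]]. -/

import Mathlib

/-!
STATEMENT 1: With K = Y^{-1/2}·[−(X+iY), Iₙ] and V_p the pure-Gaussian covariance
matrix parametrized by {X, Y}, one has Σ · Re(K†K) · Σᵀ = 2·V_p.
-/

open Matrix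

noncomputable section

/-- The 2n×2n symplectic form Σ = [[0, Iₙ],[−Iₙ, 0]]. -/
def sympJ (n : ℕ) : Matrix (Fin n ⊕ Fin n) (Fin n ⊕ Fin n) ℝ :=
  Matrix.fromBlocks 0 1 (-1) 0

/-- The positive semidefinite square root of a positive semidefinite matrix, as
`Matrix.PosSemidef.sqrt` was defined in Mathlib (Dec 2024). -/
def posSemidefSqrt {n : Type*} [Fintype n] [DecidableEq n] {A : Matrix n n ℝ}
    (hA : A.PosSemidef) : Matrix n n ℝ :=
  hA.1.eigenvectorUnitary.1 * diagonal ((↑) ∘ (Real.sqrt ·) ∘ hA.1.eigenvalues) *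
    (star hA.1.eigenvectorUnitary : Matrix n n ℝ)

/-- The coupling matrix K = Y^{-1/2}·[−(X+iY), Iₙ], where Y^{-1/2} is the inverse of
the positive-definite square root of Y. -/
def couplingK {n : ℕ} (X Y : Matrix (Fin n) (Fin n) ℝ) (hY : Y.PosDef) :
    Matrix (Fin n) (Fin n ⊕ Fin n) ℂ :=
  ((posSemidefSqrt hY.posSemidef)⁻¹).map Complex.ofReal *
    Matrix.fromCols (-(X.map Complex.ofReal + Complex.I • Y.map Complex.ofReal)) 1

/-- The covariance matrix V_p = (1/2)·[[Y⁻¹, Y⁻¹X],[XY⁻¹, XY⁻¹X + Y]] of the n-mode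
pure Gaussian state parametrized by {X, Y}. -/
def pureCov {n : ℕ} (X Y : Matrix (Fin n) (Fin n) ℝ) :
    Matrix (Fin n ⊕ Fin n) (Fin n ⊕ Fin n) ℝ :=
  (1/2 : ℝ) • Matrix.fromBlocks Y⁻¹ (Y⁻¹ * X) (X * Y⁻¹) (X * Y⁻¹ * X + Y)

/-!
Split K = R + iQ into real matrices R = Y^{-1/2}[−X, Iₙ] and Q = Y^{-1/2}[−Y, 0]; then
Re(K†K) = RᵀR + QᵀQ. Since Y^{-1/2} is symmetric with square Y⁻¹, both Gram matrices are
explicit block matrices in X, Y, Y⁻¹, and conjugating by Σ swaps the diagonal blocks and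
negates the off-diagonal ones.
-/

section PosSemidefSqrt

variable {ι : Type*} [Fintype ι] [DecidableEq ι] {A : Matrix ι ι ℝ}

lemma posSemidefSqrt_transpose (hA : A.PosSemidef) :
    (posSemidefSqrt hA)ᵀ = posSemidefSqrt hA := by
  rw [← conjTranspose_eq_transpose_of_trivial]
  simp only [posSemidefSqrt, conjTranspose_mul, diagonal_conjTranspose, star_eq_conjTranspose,
    conjTranspose_conjTranspose, Matrix.mul_assoc]
  congr 2

lemma posSemidefSqrt_mul_self (hA : A.PosSemidef) : posSemidefSqrt hA * posSemidefSqrt hA = A := by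
  have hU := UnitaryGroup.star_mul_self hA.1.eigenvectorUnitary
  have hD : diagonal ((↑) ∘ (Real.sqrt ·) ∘ hA.1.eigenvalues) *
      diagonal ((↑) ∘ (Real.sqrt ·) ∘ hA.1.eigenvalues) =
      diagonal (RCLike.ofReal ∘ hA.1.eigenvalues : ι → ℝ) := by
    rw [diagonal_mul_diagonal]
    congr 1; ext i
    simp [Real.mul_self_sqrt (hA.eigenvalues_nonneg i)]
  conv_rhs => rw [hA.1.spectral_theorem]
  simp only [posSemidefSqrt, Matrix.mul_assoc]
  rw [← Matrix.mul_assoc (star _ : Matrix ι ι ℝ) _ _, hU, Matrix.one_mul,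
    ← Matrix.mul_assoc (diagonal _) (diagonal _), hD]
  simp [Unitary.conjStarAlgAut_apply, Matrix.mul_assoc]

lemma transpose_inv_posSemidefSqrt_mul_inv (hA : A.PosSemidef) :
    ((posSemidefSqrt hA)⁻¹)ᵀ * (posSemidefSqrt hA)⁻¹ = A⁻¹ := by
  rw [transpose_nonsing_inv, posSemidefSqrt_transpose, ← Matrix.mul_inv_rev,
    posSemidefSqrt_mul_self]

end PosSemidefSqrt

lemma map_re_conjTranspose_mul_self {m l : Type*} [Fintype m] (R Q : Matrix m l ℝ) :
    ((R.map Complex.ofReal + Complex.I • Q.map Complex.ofReal)ᴴ *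
        (R.map Complex.ofReal + Complex.I • Q.map Complex.ofReal)).map Complex.re =
      Rᵀ * R + Qᵀ * Q := by
  ext i j
  simp [mul_apply, Finset.sum_add_distrib]

lemma transpose_mul_fromCols_mul_self {R : Type*} [CommRing R] {k m l₁ l₂ : Type*} [Fintype k]
    [Fintype m] (T : Matrix k m R) (A : Matrix m l₁ R) (B : Matrix m l₂ R) :
    (T * fromCols A B)ᵀ * (T * fromCols A B) =
      fromBlocks (Aᵀ * (Tᵀ * T) * A) (Aᵀ * (Tᵀ * T) * B) (Bᵀ * (Tᵀ * T) * A)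
        (Bᵀ * (Tᵀ * T) * B) := by
  rw [transpose_mul, transpose_fromCols, Matrix.mul_assoc, ← Matrix.mul_assoc Tᵀ, mul_fromCols,
    fromRows_mul_fromCols]
  simp only [Matrix.mul_assoc]

lemma couplingK_eq_real_add_I_smul {n : ℕ} (X Y : Matrix (Fin n) (Fin n) ℝ) (hY : Y.PosDef) :
    couplingK X Y hY =
      ((posSemidefSqrt hY.posSemidef)⁻¹ * fromCols (-X) 1).map Complex.ofReal +
        Complex.I • ((posSemidefSqrt hY.posSemidef)⁻¹ * fromCols (-Y) 0).map Complex.ofReal := by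
  ext i (j | j)
  · simp [couplingK, mul_apply, Finset.mul_sum, ← Finset.sum_neg_distrib,
      ← Finset.sum_add_distrib]
    exact Finset.sum_congr rfl fun _ _ ↦ by ring
  · simp [couplingK]

lemma sympJ_mul_fromBlocks_mul_transpose {n : ℕ} (A B C D : Matrix (Fin n) (Fin n) ℝ) :
    sympJ n * fromBlocks A B C D * (sympJ n)ᵀ = fromBlocks D (-C) (-B) A := by
  simp [sympJ, fromBlocks_transpose, fromBlocks_multiply]

theorem symp_re_KdagK_symp_eq_two_cov_general
    (n : ℕ) (X Y : Matrix (Fin n) (Fin n) ℝ)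
    (hX : X.IsSymm) (hY : Y.PosDef) :
    sympJ n * ((couplingK X Y hY)ᴴ * couplingK X Y hY).map Complex.re * (sympJ n)ᵀ =
      (2 : ℝ) • pureCov X Y := by
  have hYs : Yᵀ = Y := hY.isHermitian
  have hYY : Y * Y⁻¹ * Y = Y := by
    rw [mul_nonsing_inv _ (isUnit_iff_ne_zero.mpr hY.det_pos.ne'), Matrix.one_mul]
  rw [couplingK_eq_real_add_I_smul, map_re_conjTranspose_mul_self,
    transpose_mul_fromCols_mul_self, transpose_mul_fromCols_mul_self,
    transpose_inv_posSemidefSqrt_mul_inv, fromBlocks_add, sympJ_mul_fromBlocks_mul_transpose,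
    pureCov, smul_smul]
  simp [hX.eq, hYs, hYY]

theorem symp_re_KdagK_symp_eq_two_cov
    (n : ℕ) (hn : 0 < n) (X Y : Matrix (Fin n) (Fin n) ℝ)
    (hX : X.IsSymm) (hYs : Y.IsSymm) (hY : Y.PosDef) :
    sympJ n * ((couplingK X Y hY)ᴴ * couplingK X Y hY).map Complex.re * (sympJ n)ᵀ =
      (2 : ℝ) • pureCov X Y :=
  symp_re_KdagK_symp_eq_two_cov_general n X Y hX hY
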